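/- arXiv:2507.04549 — 4 statements merged into one kernel-verified Lean document; each statement's English description precedes it below -/
import Mathlib

section
/- Let k be a field and V a finite-dimensional k-vector space with dim V ≥ 3, and let v ∈ V be a nonzero vector. If g ∈ GL(V) is such that the induced map Λ²g on the exterior square preserves the subspace v ∧ V = {v ∧ w : w ∈ V} ⊆ Λ²V, then g·v is a scalar multiple of v. -/
/-!
If `g v` were not a multiple of `v`, extend `v, g v` to a linearly independent triple
`v, g v, w` (possible as `dim V ≥ 3`). Writing `w = g w'`, the hypothesis gives
`g v ∧ w = v ∧ u` for some `u`, hence `v ∧ g v ∧ w = v ∧ v ∧ u = 0`, contradicting the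
fact that a wedge of linearly independent vectors is nonzero.
-/

open ExteriorAlgebra

theorem ExteriorAlgebra.ιMulti_ne_zero_of_linearIndependent {K E : Type*} [Field K]
    [AddCommGroup E] [Module K E] {n : ℕ} {v : Fin n → E} (hv : LinearIndependent K v) :
    ιMulti K n v ≠ 0 := by
  have := (exteriorPower.ιMulti_family_linearIndependent_field (n := n) hv).ne_zero
    (Set.powersetCard.ofFinEmbEquiv (RelEmbedding.refl (· ≤ ·)))
  rw [← exteriorPower.ιMulti_apply_coe, ne_eq, ZeroMemClass.coe_eq_zero]
  simpa [exteriorPower.ιMulti_family] using this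

theorem ExteriorAlgebra.ι_mul_ι_apply_mul_ι_apply_eq_zero {R M N : Type*} [CommRing R]
    [AddCommGroup M] [Module R M] [AddCommGroup N] [Module R N] {f : M →ₗ[R] N}
    {v w : M} {x u : N} (h : map f (ι R v * ι R w) = ι R x * ι R u) :
    ι R x * ι R (f v) * ι R (f w) = 0 := by
  rw [map_mul, map_apply_ι, map_apply_ι] at h
  rw [mul_assoc, h, ← mul_assoc, ι_sq_zero, zero_mul]

theorem stmt_0_general {k V : Type*} [Field k] [AddCommGroup V] [Module k V]
    (hdim : 3 ≤ Module.finrank k V)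
    (v : V) (hv : v ≠ 0) (g : V ≃ₗ[k] V)
    (hg : ∀ w : V, ∃ u : V,
      ExteriorAlgebra.map (g : V →ₗ[k] V)
        (ExteriorAlgebra.ι k v * ExteriorAlgebra.ι k w)
        = ExteriorAlgebra.ι k v * ExteriorAlgebra.ι k u) :
    ∃ c : k, g v = c • v := by
  by_contra! hgv
  have hpair : LinearIndependent k ![v, g v] :=
    (LinearIndependent.pair_iff' hv).mpr fun a h => hgv a h.symm
  obtain ⟨w, hw⟩ := exists_linearIndependent_snoc_of_lt_finrank hpair hdim
  obtain ⟨u, hu⟩ := hg (g.symm w)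
  apply ιMulti_ne_zero_of_linearIndependent hw
  simpa [ιMulti_apply, List.ofFn_succ, Fin.snoc, mul_assoc] using
    ι_mul_ι_apply_mul_ι_apply_eq_zero hu

/-- If `g ∈ GL(V)` is such that the induced map on the exterior square preserves the
subspace `v ∧ V`, then `g v` is a scalar multiple of `v` (for `dim V ≥ 3`, `v ≠ 0`). -/
theorem stmt_0 {k V : Type*} [Field k] [AddCommGroup V] [Module k V]
    [FiniteDimensional k V] (hdim : 3 ≤ Module.finrank k V)
    (v : V) (hv : v ≠ 0) (g : V ≃ₗ[k] V)
    (hg : ∀ w : V, ∃ u : V,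
      ExteriorAlgebra.map (g : V →ₗ[k] V)
        (ExteriorAlgebra.ι k v * ExteriorAlgebra.ι k w)
        = ExteriorAlgebra.ι k v * ExteriorAlgebra.ι k u) :
    ∃ c : k, g v = c • v :=
  stmt_0_general hdim v hv g hg
end

section
/- Let k be a field of characteristic 2 and let W = Λ²(k^{2n+2}) be the space of alternating (2n+2)×(2n+2) matrices (matrices A with Aᵀ = A and zero diagonal), regarded as a Lie algebra under the bracket inherited from so_{2n+2}. Then for n ≥ 1 the center of the orthogonal Lie algebra so_{2n+2}(k) with respect to the split quadratic form Σ_{i=0}^{n} x_i x_{2n+1-i} is one-dimensional, spanned by the identity matrix (which lies in so_{2n+2} only in characteristic 2). -/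
open Matrix

/-- In characteristic 2, the center of the orthogonal Lie algebra `so_{2n+2}` (for the
split quadratic form `∑ xᵢ x_{2n+1-i}`, realized as matrices `A` with `Aᵀ M + M A = 0` and
zero diagonal of `M A`) is one-dimensional, spanned by the identity matrix. -/
theorem stmt_10 {k : Type*} [Field k] [CharP k 2] (n : ℕ) (hn : 1 ≤ n) :
    let M : Matrix (Fin (2 * n + 2)) (Fin (2 * n + 2)) k :=
      Matrix.of fun i j => if i.1 + j.1 = 2 * n + 1 then 1 else 0
    let so : Set (Matrix (Fin (2 * n + 2)) (Fin (2 * n + 2)) k) :=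
      {A | Aᵀ * M + M * A = 0 ∧ ∀ i, (M * A) i i = 0}
    {A | A ∈ so ∧ ∀ B ∈ so, A * B = B * A}
      = {A | ∃ c : k, A = c • (1 : Matrix (Fin (2 * n + 2)) (Fin (2 * n + 2)) k)} := by
  intro M so
  have hMdef : ∀ i j : Fin (2 * n + 2), M i j = if i.1 + j.1 = 2 * n + 1 then 1 else 0 :=
    fun i j => rfl
  have hrev : ∀ i c : Fin (2 * n + 2), (i.1 + c.1 = 2 * n + 1) ↔ c = i.rev := by
    intro i c
    rw [Fin.ext_iff, Fin.val_rev]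
    omega
  have hM1 : ∀ (X : Matrix (Fin (2 * n + 2)) (Fin (2 * n + 2)) k) i j,
      (M * X) i j = X i.rev j := by
    intro X i j
    rw [Matrix.mul_apply, Finset.sum_eq_single i.rev]
    · rw [hMdef, if_pos ((hrev i i.rev).mpr rfl), one_mul]
    · intro c _ hc
      rw [hMdef, if_neg (fun h => hc ((hrev i c).mp h)), zero_mul]
    · intro h; exact absurd (Finset.mem_univ _) h
  have hM2 : ∀ (X : Matrix (Fin (2 * n + 2)) (Fin (2 * n + 2)) k) i j,
      (X * M) i j = X i j.rev := by
    intro X i j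
    rw [Matrix.mul_apply, Finset.sum_eq_single j.rev]
    · rw [hMdef, if_pos (by
        have := (hrev j j.rev).mpr rfl
        omega), mul_one]
    · intro c _ hc
      rw [hMdef, if_neg (fun h => hc ((hrev j c).mp (by omega))), mul_zero]
    · intro h; exact absurd (Finset.mem_univ _) h
  have hso : ∀ B, B ∈ so ↔ ((∀ i j, B j.rev i + B i.rev j = 0) ∧ ∀ i, B i.rev i = 0) := by
    intro B
    have e1 : (Bᵀ * M + M * B = 0) ↔ ∀ i j, B j.rev i + B i.rev j = 0 := by
      constructor
      · intro h i j
        have h2 := congrFun (congrFun h i) j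
        rwa [Matrix.add_apply, hM2, hM1, Matrix.transpose_apply, Matrix.zero_apply] at h2
      · intro h
        ext i j
        rw [Matrix.add_apply, hM2, hM1, Matrix.transpose_apply, Matrix.zero_apply]
        exact h i j
    have e2 : (∀ i, (M * B) i i = 0) ↔ ∀ i, B i.rev i = 0 := by
      constructor
      · intro h i; have := h i; rwa [hM1] at this
      · intro h i; rw [hM1]; exact h i
    exact Iff.trans Iff.rfl (and_congr e1 e2)
  have havoid : ∀ x y : Fin (2 * n + 2), ∃ q, q ≠ x ∧ q ≠ y := by
    intro x y
    have hne : (({x, y} : Finset (Fin (2 * n + 2)))ᶜ).Nonempty := by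
      rw [← Finset.card_pos, Finset.card_compl]
      have h1 : ({x, y} : Finset (Fin (2 * n + 2))).card ≤ 2 :=
        (Finset.card_insert_le x {y}).trans (by simp)
      have h2 : Fintype.card (Fin (2 * n + 2)) = 2 * n + 2 := Fintype.card_fin _
      omega
    obtain ⟨q, hq⟩ := hne
    rw [Finset.mem_compl, Finset.mem_insert, Finset.mem_singleton] at hq
    push_neg at hq
    exact ⟨q, hq⟩
  have hfliprev : ∀ a b : Fin (2 * n + 2), a = b.rev ↔ b = a.rev := by
    intro a b
    constructor <;> rintro rfl <;> rw [Fin.rev_rev]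
  ext A
  simp only [Set.mem_setOf_eq]
  constructor
  · rintro ⟨hA, hc⟩
    -- the generators of so
    have hCso : ∀ p q : Fin (2 * n + 2), q ≠ p.rev →
        (Matrix.single p q (1 : k) + Matrix.single q.rev p.rev 1) ∈ so := by
      intro p q hpq
      rw [hso]
      have hpq' : q.1 + p.1 ≠ 2 * n + 1 := by
        intro h
        exact hpq ((hrev p q).mp (by omega))
      constructor
      · intro i j
        simp only [Matrix.add_apply, Matrix.single, Matrix.of_apply]
        simp only [Fin.ext_iff, Fin.val_rev]
        have hi := i.isLt
        have hj := j.isLt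
        have hp := p.isLt
        have hq := q.isLt
        split_ifs <;> first | omega | (norm_num; try exact CharTwo.two_eq_zero)
      · intro i
        simp only [Matrix.add_apply, Matrix.single, Matrix.of_apply]
        simp only [Fin.ext_iff, Fin.val_rev]
        have hi := i.isLt
        have hp := p.isLt
        have hq := q.isLt
        split_ifs <;> first | omega | norm_num
    -- the commutation equations
    have hcomm : ∀ p q a b : Fin (2 * n + 2), q ≠ p.rev →
        (if b = q then A a p else 0) + (if b = p.rev then A a q.rev else 0)
          = (if a = p then A q b else 0) + (if a = q.rev then A p.rev b else 0) := by
      intro p q a b hpq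
      have h := hc _ (hCso p q hpq)
      have h2 := congrFun (congrFun h a) b
      rw [mul_add, add_mul, Matrix.add_apply, Matrix.add_apply] at h2
      have t1 : (A * Matrix.single p q (1 : k)) a b = if b = q then A a p else 0 := by
        split
        · next hb => subst hb; rw [Matrix.mul_single_apply_same, mul_one]
        · next hb => rw [Matrix.mul_single_apply_of_ne (c := 1) p q a b hb]
      have t2 : (A * Matrix.single q.rev p.rev (1 : k)) a b =
          if b = p.rev then A a q.rev else 0 := by
        split
        · next hb => subst hb; rw [Matrix.mul_single_apply_same, mul_one]
        · next hb => rw [Matrix.mul_single_apply_of_ne (c := 1) q.rev p.rev a b hb]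
      have t3 : (Matrix.single p q (1 : k) * A) a b = if a = p then A q b else 0 := by
        split
        · next ha => subst ha; rw [Matrix.single_mul_apply_same, one_mul]
        · next ha => rw [Matrix.single_mul_apply_of_ne (c := 1) p q a b ha]
      have t4 : (Matrix.single q.rev p.rev (1 : k) * A) a b =
          if a = q.rev then A p.rev b else 0 := by
        split
        · next ha => subst ha; rw [Matrix.single_mul_apply_same, one_mul]
        · next ha => rw [Matrix.single_mul_apply_of_ne (c := 1) q.rev p.rev a b ha]
      rw [t1, t2, t3, t4] at h2
      exact h2
    -- off-diagonal entries vanish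
    have hoff : ∀ a p : Fin (2 * n + 2), a ≠ p → A a p = 0 := by
      intro a p hap
      obtain ⟨q, hq1, hq2⟩ := havoid p.rev a.rev
      have haq : a ≠ q.rev := fun h => hq2 ((hfliprev a q).mp h)
      have h := hcomm p q a q hq1
      rw [if_pos rfl, if_neg hq1, if_neg hap, if_neg haq] at h
      simpa using h
    -- diagonal entries are all equal
    have hdiag0 : ∀ a q : Fin (2 * n + 2), q ≠ a → q ≠ a.rev → A a a = A q q := by
      intro a q hq1 hq2
      have haq : a ≠ q.rev := fun h => hq2 ((hfliprev a q).mp h)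
      have h := hcomm a q a q hq2
      rw [if_pos rfl, if_pos rfl, if_neg hq2, if_neg haq] at h
      simpa using h
    have hdiag : ∀ a b : Fin (2 * n + 2), A a a = A b b := by
      intro a b
      by_cases h1 : b = a
      · rw [h1]
      by_cases h2 : b = a.rev
      · obtain ⟨c, hc1, hc2⟩ := havoid a a.rev
        have e1 := hdiag0 a c hc1 hc2
        have e2 := hdiag0 b c (h2 ▸ hc2) (by rw [h2, Fin.rev_rev]; exact hc1)
        rw [e1, e2]
      · exact hdiag0 a b h1 h2
    refine ⟨A ⟨0, by omega⟩ ⟨0, by omega⟩, ?_⟩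
    ext a b
    by_cases hab : a = b
    · subst hab
      rw [Matrix.smul_apply, Matrix.one_apply_eq, smul_eq_mul, mul_one]
      exact hdiag a _
    · rw [Matrix.smul_apply, Matrix.one_apply_ne hab, smul_eq_mul, mul_zero]
      exact hoff a b hab
  · rintro ⟨c, rfl⟩
    refine ⟨?_, ?_⟩
    · rw [hso]
      constructor
      · intro i j
        have hiff : (j.rev = i) ↔ (i.rev = j) := by
          constructor <;> rintro rfl <;> rw [Fin.rev_rev]
        rw [Matrix.smul_apply, Matrix.smul_apply, Matrix.one_apply, Matrix.one_apply,
          if_congr hiff rfl rfl, ← smul_add]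
        rw [CharTwo.add_self_eq_zero, smul_zero]
      · intro i
        have hne : i.rev ≠ i := by
          intro h
          rw [Fin.ext_iff, Fin.val_rev] at h
          have := i.isLt
          omega
        rw [Matrix.smul_apply, Matrix.one_apply_ne hne, smul_zero]
    · intro B _
      rw [Matrix.smul_mul, Matrix.mul_smul, one_mul, mul_one]
end

section
/- Let k be an algebraically closed field of characteristic 2 and consider the symplectic Lie algebra sp_{2n}(k) ⊂ sl_{2n}(k) for n ≥ 2. There is no vector-space complement C of sp_{2n}(k) inside sl_{2n}(k) that is invariant under the conjugation action of the symplectic group Sp_{2n}(k); equivalently, the Sp_{2n}(k)-module sl_{2n}(k) does not split as sp_{2n}(k) ⊕ C. -/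
/-!
For `v ∈ k^{2n}` the rank-one matrix `N = v (vJ)` is nilpotent, lies in `sp_{2n}`, and
`1 + tN` is a symplectic transvection. If `C` is an `Sp_{2n}`-stable complement and `X ∈ C`,
conjugating `X` by these transvections for two suitable values of `t` isolates
`NXN = tr(NX) • N ∈ C ∩ sp_{2n} = 0`, so the quadratic form `u ↦ u (JX) u` vanishes identically.
Then `JX` is alternating, and in characteristic 2 alternating matrices are symmetric, which says
exactly that `X ∈ sp_{2n}`. Hence `C = 0`, which is absurd as soon as `sl_{2n} ≠ sp_{2n}`, i.e. `n ≥ 2`.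
-/

open Matrix

namespace Matrix

section CommRing

variable {k : Type*} [CommRing k] {m : Type*} [Fintype m] [DecidableEq m]

theorem J_mulVec (v : m ⊕ m → k) : J m k *ᵥ v = -(v ᵥ* J m k) := by
  rw [← vecMul_transpose, J_transpose, vecMul_neg]

theorem vecMul_J_dotProduct_self (v : m ⊕ m → k) : (v ᵥ* J m k) ⬝ᵥ v = 0 := by
  simp [J, vecMul, dotProduct, Fintype.sum_sum_type, fromBlocks, one_apply, mul_comm]

theorem vecMulVec_mul_mul_vecMulVec {ι : Type*} [Fintype ι] (u w : ι → k) (X : Matrix ι ι k) :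
    vecMulVec u w * X * vecMulVec u w = trace (vecMulVec u w * X) • vecMulVec u w := by
  rw [vecMulVec_mul, vecMulVec_mul_vecMulVec, vecMulVec_smul, trace_vecMulVec, dotProduct_comm]

theorem one_add_smul_mul_mul_one_sub_smul {ι : Type*} [Fintype ι] [DecidableEq ι]
    (N X : Matrix ι ι k) (t : k) :
    (1 + t • N) * X * (1 - t • N) = X + (t • (N * X - X * N) + t ^ 2 • -(N * X * N)) := by
  simp only [add_mul, mul_sub, one_mul, mul_one, smul_mul_assoc, mul_smul_comm]
  module

theorem one_add_smul_mem_symplecticGroup {N : Matrix (m ⊕ m) (m ⊕ m) k}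
    (hN : Nᵀ * J m k + J m k * N = 0) (hN₂ : Nᵀ * J m k * N = 0) (t : k) :
    1 + t • N ∈ symplecticGroup m k := by
  rw [SymplecticGroup.mem_iff']
  calc (1 + t • N)ᵀ * J m k * (1 + t • N)
      = J m k + t • (Nᵀ * J m k + J m k * N) + (t * t) • (Nᵀ * J m k * N) := by
        simp only [transpose_add, transpose_one, transpose_smul, add_mul, mul_add, one_mul,
          mul_one, smul_mul_assoc, mul_smul_comm, smul_smul, smul_add]
        abel
    _ = J m k := by rw [hN, hN₂, smul_zero, smul_zero, add_zero, add_zero]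

theorem add_transpose_eq_zero_of_forall_vecMul_dotProduct_self {ι : Type*} [Fintype ι]
    [DecidableEq ι] {M : Matrix ι ι k} (h : ∀ u, (u ᵥ* M) ⬝ᵥ u = 0) : M + Mᵀ = 0 := by
  have polar : ∀ u w, (u ᵥ* M) ⬝ᵥ w + (w ᵥ* M) ⬝ᵥ u = 0 := by
    intro u w
    have := h (u + w)
    rw [add_vecMul, add_dotProduct, dotProduct_add, dotProduct_add, h u, h w] at this
    linear_combination this
  ext i j
  simpa [single_one_vecMul, dotProduct_single_one] using polar (Pi.single i 1) (Pi.single j 1)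

theorem transpose_mul_J_add_J_mul_of_charTwo [CharP k 2] {X : Matrix (m ⊕ m) (m ⊕ m) k}
    (h : J m k * X + (J m k * X)ᵀ = 0) : Xᵀ * J m k + J m k * X = 0 := by
  rw [transpose_mul, J_transpose, mul_neg] at h
  ext i j
  simpa [CharTwo.neg_eq, add_comm] using congr($h i j)

theorem single_inl_inl_notMem_sp [Nontrivial k] (i j : m) :
    (single (Sum.inl i) (Sum.inl j) (1 : k))ᵀ * J m k
      + J m k * single (Sum.inl i) (Sum.inl j) 1 ≠ 0 := by
  intro h
  have := congrFun (congrFun h (Sum.inr i)) (Sum.inl j)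
  simp [J, Matrix.mul_apply, Matrix.single] at this

def symplecticRankOne (v : m ⊕ m → k) : Matrix (m ⊕ m) (m ⊕ m) k :=
  vecMulVec v (v ᵥ* J m k)

theorem symplecticRankOne_mem_sp (v : m ⊕ m → k) :
    (symplecticRankOne v)ᵀ * J m k + J m k * symplecticRankOne v = 0 := by
  rw [symplecticRankOne, transpose_vecMulVec, vecMulVec_mul, mul_vecMulVec, J_mulVec]
  ext
  simp [vecMulVec_apply]

theorem symplecticRankOne_mul_self (v : m ⊕ m → k) :
    symplecticRankOne v * symplecticRankOne v = 0 := by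
  rw [symplecticRankOne, vecMulVec_mul_vecMulVec, vecMul_J_dotProduct_self, zero_smul,
    vecMulVec_zero]

theorem transpose_symplecticRankOne_mul_J_mul (v : m ⊕ m → k) :
    (symplecticRankOne v)ᵀ * J m k * symplecticRankOne v = 0 := by
  rw [symplecticRankOne, transpose_vecMulVec, vecMulVec_mul, vecMulVec_mul_vecMulVec,
    vecMul_J_dotProduct_self, zero_smul, vecMulVec_zero]

theorem one_add_smul_symplecticRankOne_mem_symplecticGroup (v : m ⊕ m → k) (t : k) :
    1 + t • symplecticRankOne v ∈ symplecticGroup m k :=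
  one_add_smul_mem_symplecticGroup (symplecticRankOne_mem_sp v)
    (transpose_symplecticRankOne_mul_J_mul v) t

theorem inv_one_add_smul_symplecticRankOne (v : m ⊕ m → k) (t : k) :
    (1 + t • symplecticRankOne v)⁻¹ = 1 - t • symplecticRankOne v := by
  refine inv_eq_right_inv ?_
  rw [add_mul, one_mul, mul_sub, mul_one, smul_mul_smul_comm, symplecticRankOne_mul_self,
    smul_zero, sub_zero, sub_add_cancel]

end CommRing

end Matrix

theorem Submodule.mem_of_forall_smul_add_sq_smul_mem {K V : Type*} [Field K] [Infinite K]
    [AddCommGroup V] [Module K V] (C : Submodule K V) {a b : V}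
    (h : ∀ t : K, t • a + t ^ 2 • b ∈ C) : b ∈ C := by
  classical
  obtain ⟨t, ht⟩ := Infinite.exists_notMem_finset ({0, 1} : Finset K)
  have hne : t ^ 2 - t ≠ 0 := by
    rw [sq, ← mul_sub_one]
    simp only [Finset.mem_insert, Finset.mem_singleton, not_or] at ht
    exact mul_ne_zero ht.1 (sub_ne_zero.2 ht.2)
  have key : (t ^ 2 - t) • b = (t • a + t ^ 2 • b) - t • ((1 : K) • a + (1 : K) ^ 2 • b) := by
    module
  rw [← C.smul_mem_iff hne, key]
  exact C.sub_mem (h t) (C.smul_mem t (h 1))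

namespace Matrix

variable {k : Type*} [Field k] {m : Type*} [Fintype m] [DecidableEq m]
  {C : Submodule k (Matrix (m ⊕ m) (m ⊕ m) k)}

theorem trace_symplecticRankOne_mul_eq_zero [Infinite k]
    (hC : ∀ A ∈ C, Aᵀ * J m k + J m k * A = 0 → A = 0)
    (hstab : ∀ g ∈ symplecticGroup m k, ∀ A ∈ C, g * A * g⁻¹ ∈ C)
    {X : Matrix (m ⊕ m) (m ⊕ m) k} (hX : X ∈ C) (v : m ⊕ m → k) :
    trace (symplecticRankOne v * X) = 0 := by
  set N := symplecticRankOne v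
  have hNXN : N * X * N ∈ C := by
    refine C.neg_mem_iff.1 (C.mem_of_forall_smul_add_sq_smul_mem (a := N * X - X * N) fun t => ?_)
    have := C.sub_mem
      (hstab _ (one_add_smul_symplecticRankOne_mem_symplecticGroup v t) X hX) hX
    rwa [inv_one_add_smul_symplecticRankOne, one_add_smul_mul_mul_one_sub_smul,
      add_sub_cancel_left] at this
  have hzero : trace (N * X) • N = 0 := by
    refine hC _ (vecMulVec_mul_mul_vecMulVec v _ X ▸ hNXN) ?_
    rw [transpose_smul, smul_mul_assoc, mul_smul_comm, ← smul_add, symplecticRankOne_mem_sp,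
      smul_zero]
  rcases smul_eq_zero.1 hzero with h | h
  · exact h
  · rw [h, zero_mul, trace_zero]

theorem eq_zero_of_mem_of_symplecticGroup_stable [Infinite k] [CharP k 2]
    (hC : ∀ A ∈ C, Aᵀ * J m k + J m k * A = 0 → A = 0)
    (hstab : ∀ g ∈ symplecticGroup m k, ∀ A ∈ C, g * A * g⁻¹ ∈ C)
    {X : Matrix (m ⊕ m) (m ⊕ m) k} (hX : X ∈ C) : X = 0 := by
  refine hC X hX (transpose_mul_J_add_J_mul_of_charTwo
    (add_transpose_eq_zero_of_forall_vecMul_dotProduct_self fun u => ?_))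
  have := trace_symplecticRankOne_mul_eq_zero hC hstab hX u
  rwa [symplecticRankOne, vecMulVec_mul, trace_vecMulVec, dotProduct_comm, vecMul_vecMul] at this

end Matrix

/-- Over an algebraically closed field of characteristic 2 and for `n ≥ 2`, there is no
`Sp_{2n}(k)`-stable linear complement of `sp_{2n}(k)` inside `sl_{2n}(k)`: no submodule `C`
of traceless matrices meets `sp_{2n}` trivially, together with `sp_{2n}` spans all
traceless matrices, and is stable under conjugation by the symplectic group. -/
theorem stmt_11 {k : Type*} [Field k] [IsAlgClosed k] [CharP k 2] (n : ℕ) (hn : 2 ≤ n) :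
    ¬ ∃ C : Submodule k (Matrix (Fin n ⊕ Fin n) (Fin n ⊕ Fin n) k),
        -- C consists of traceless matrices
        (∀ A ∈ C, A.trace = 0) ∧
        -- C meets sp_{2n} trivially
        (∀ A ∈ C, Aᵀ * Matrix.J (Fin n) k + Matrix.J (Fin n) k * A = 0 → A = 0) ∧
        -- C + sp_{2n} = sl_{2n}
        (∀ A : Matrix (Fin n ⊕ Fin n) (Fin n ⊕ Fin n) k, A.trace = 0 →
          ∃ S, (Sᵀ * Matrix.J (Fin n) k + Matrix.J (Fin n) k * S = 0) ∧ A - S ∈ C) ∧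
        -- C is stable under conjugation by Sp_{2n}(k)
        (∀ g ∈ Matrix.symplecticGroup (Fin n) k, ∀ A ∈ C, g * A * g⁻¹ ∈ C) := by
  rintro ⟨C, -, hC, hspan, hstab⟩
  let i : Fin n := ⟨0, by omega⟩
  let j : Fin n := ⟨1, by omega⟩
  have hij : Sum.inl i ≠ (Sum.inl j : Fin n ⊕ Fin n) := by simp [i, j, Fin.ext_iff]
  obtain ⟨S, hS, hES⟩ := hspan _ (trace_single_eq_of_ne _ _ (1 : k) hij)
  have hSE := sub_eq_zero.1 (eq_zero_of_mem_of_symplecticGroup_stable hC hstab hES)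
  exact single_inl_inl_notMem_sp i j (hSE ▸ hS)
end

section
/- Let k be a field of characteristic 2 and n ≥ 2. In Λ²(k^{2n+2}) with basis vectors e_i ∧ e_j (0 ≤ i < j ≤ 2n+1), consider the 2n-dimensional subspace N = span{ (e_0 + e_{2n+1}) ∧ e_j : 1 ≤ j ≤ 2n }. If g ∈ GL_{2n+2}(k) is such that Λ²g preserves N, then g·(e_0 + e_{2n+1}) is a scalar multiple of e_0 + e_{2n+1}. -/
open ExteriorAlgebra

/-!
Let `π : V → V ⧸ k v₀`. Every generator `v₀ ∧ eⱼ` of `N` is killed by `Λ²π`, so if `Λ²g`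
preserves `N` then `π(g v₀) ∧ π(g eⱼ) = 0` for all `j`. Were `g v₀ ∉ k v₀`, this would force
every `g eⱼ` into the plane spanned by `v₀` and `g v₀`, which cannot hold three linearly
independent vectors `g e₁, g e₂, g e₃`.
-/

section

variable {K E : Type*} [Field K] [AddCommGroup E] [Module K E]

theorem ExteriorAlgebra.ι_mul_ι_ne_zero_of_linearIndependent {a b : E}
    (h : LinearIndependent K ![a, b]) : ι K a * ι K b ≠ 0 := by
  have hne := (exteriorPower.ιMulti_family_linearIndependent_field (n := 2) h).ne_zero
    (Set.powersetCard.ofFinEmbEquiv (RelEmbedding.refl (· ≤ ·)))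
  contrapose! hne
  ext1
  simpa [exteriorPower.ιMulti_family, ιMulti_apply] using hne

theorem ExteriorAlgebra.mem_span_singleton_of_ι_mul_ι_eq_zero {a b : E} (ha : a ≠ 0)
    (h : ι K a * ι K b = 0) : b ∈ K ∙ a := by
  by_contra hb
  refine ι_mul_ι_ne_zero_of_linearIndependent ((LinearIndependent.pair_iff' ha).mpr ?_) h
  exact fun c hc => hb (Submodule.mem_span_singleton.mpr ⟨c, hc⟩)

theorem ExteriorAlgebra.map_mkQ_span_singleton_ι_mul (v : E) (x : ExteriorAlgebra K E) :
    map (K ∙ v).mkQ (ι K v * x) = 0 := by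
  rw [map_mul, map_apply_ι, Submodule.mkQ_apply,
    (Submodule.Quotient.mk_eq_zero _).mpr (Submodule.mem_span_singleton_self v), map_zero,
    zero_mul]

theorem Submodule.mem_span_pair_of_mkQ_mem_span_singleton {v x y : E}
    (h : (K ∙ v).mkQ y ∈ K ∙ (K ∙ v).mkQ x) : y ∈ span K {v, x} := by
  rwa [span_insert, ← comap_map_mkQ, map_span, Set.image_singleton]

theorem ExteriorAlgebra.mem_span_singleton_of_ι_mkQ_mul_ι_mkQ_eq_zero {v x : E} {w : Fin 3 → E}
    (hw : LinearIndependent K w)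
    (h : ∀ i, ι K ((K ∙ v).mkQ x) * ι K ((K ∙ v).mkQ (w i)) = 0) : x ∈ K ∙ v := by
  classical
  by_contra hx
  have hx' : (K ∙ v).mkQ x ≠ 0 := by simpa [Submodule.Quotient.mk_eq_zero] using hx
  have hw_mem : Set.range w ≤ Submodule.span K (({v, x} : Finset E) : Set E) := by
    rintro _ ⟨i, rfl⟩
    simpa using Submodule.mem_span_pair_of_mkQ_mem_span_singleton
      (mem_span_singleton_of_ι_mul_ι_eq_zero hx' (h i))
  have h3 : 3 ≤ ({v, x} : Finset E).card := by
    simpa using linearIndependent_le_span_aux' w hw _ hw_mem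
  exact absurd (h3.trans Finset.card_le_two) (by norm_num)

end

/-- In characteristic 2, with `v₀ = e₀ + e_{2n+1}` in `k^{2n+2}` and
`N = span { v₀ ∧ eⱼ : 1 ≤ j ≤ 2n }` inside the exterior square, any `g ∈ GL_{2n+2}(k)`
whose induced map on the exterior square preserves `N` maps `v₀` to a scalar multiple
of `v₀`. -/
theorem stmt_15 {k : Type*} [Field k] (n : ℕ) (hn : 2 ≤ n) :
    let V := Fin (2 * n + 2) → k
    let v₀ : V := (Pi.single ⟨0, by omega⟩ (1 : k) : V)
      + (Pi.single ⟨2 * n + 1, by omega⟩ (1 : k) : V)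
    let N : Submodule k (ExteriorAlgebra k V) := Submodule.span k
      {x | ∃ j : Fin (2 * n), x = ExteriorAlgebra.ι k v₀
        * ExteriorAlgebra.ι k
            (Pi.single (⟨j.1 + 1, by have := j.2; omega⟩ : Fin (2 * n + 2)) (1 : k) : V)}
    ∀ g : V ≃ₗ[k] V,
      (∀ x ∈ N, ExteriorAlgebra.map (g : V →ₗ[k] V) x ∈ N) →
      ∃ c : k, g v₀ = c • v₀ := by
  intro V v₀ N g hg
  let j : Fin 3 → Fin (2 * n) := Fin.castLE (by omega)
  let e : Fin 3 → V := fun i => Pi.single ⟨(j i).1 + 1, by omega⟩ 1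
  have he : LinearIndependent k e :=
    (Pi.linearIndependent_single_one (Fin (2 * n + 2)) k).comp _ fun a b hab => by
      simpa [j, Fin.ext_iff] using hab
  have hN : N ≤ LinearMap.ker (map (k ∙ v₀).mkQ).toLinearMap := by
    refine Submodule.span_le.mpr ?_
    rintro _ ⟨i, rfl⟩
    simp only [SetLike.mem_coe, LinearMap.mem_ker, AlgHom.toLinearMap_apply]
    exact map_mkQ_span_singleton_ι_mul v₀ _
  have hgN : ∀ i, ι k (g v₀) * ι k (g (e i)) ∈ N := fun i => by
    simpa [map_mul] using hg _ (Submodule.subset_span ⟨j i, rfl⟩)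
  obtain ⟨c, hc⟩ := Submodule.mem_span_singleton.mp <|
    mem_span_singleton_of_ι_mkQ_mul_ι_mkQ_eq_zero (he.map' g.toLinearMap g.ker) fun i => by
      have := hN (hgN i)
      rwa [LinearMap.mem_ker, AlgHom.toLinearMap_apply, map_mul, map_apply_ι, map_apply_ι] at this
  exact ⟨c, hc.symm⟩
end
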